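/- arXiv:math/0306050 — 2 statements merged into one kernel-verified Lean document; each statement's English description precedes it below -/
import Mathlib

section
/- For an integer m ≥ 2 and the indicial polynomial ψ(λ) := λ(λ+1)⋯(λ+m−2) − m!, one has ψ′(2) = m!·(H_m − 1), where H_m = ∑_{j=1}^m 1/j is the m-th harmonic number. -/
/-! At λ = 2 none of the factors λ + k of the rising product vanishes, so its logarithmic
derivative is ∑ 1/(2 + k). The product itself equals 2·3⋯m = m!, and the sum runs over
1/2, …, 1/m, which is H_m − 1. -/

open Finset Nat

theorem hasDerivAt_prod_range_add (n : ℕ) {x : ℝ} (hx : ∀ k < n, x + k ≠ 0) :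
    HasDerivAt (fun y : ℝ => ∏ k ∈ range n, (y + k))
      ((∏ k ∈ range n, (x + k)) * ∑ k ∈ range n, (x + k)⁻¹) x := by
  induction n with
  | zero => simpa using hasDerivAt_const x (1 : ℝ)
  | succ n ih =>
    have hxn : x + n ≠ 0 := hx n n.lt_succ_self
    have key : HasDerivAt (fun y : ℝ => (∏ k ∈ range n, (y + k)) * (y + n)) _ x :=
      (ih fun k hk => hx k (Nat.lt_succ_of_lt hk)).mul ((hasDerivAt_id x).add_const (n : ℝ))
    simp only [prod_range_succ, sum_range_succ]
    refine key.congr_deriv ?_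
    field_simp

theorem prod_range_two_add_eq_factorial (n : ℕ) :
    ∏ k ∈ range n, ((2 : ℝ) + k) = (n + 1)! := by
  rw [← prod_range_add_one_eq_factorial, prod_range_succ']
  push_cast
  simp only [mul_one]
  exact prod_congr rfl fun k _ => by ring

theorem sum_range_inv_two_add (n : ℕ) :
    ∑ k ∈ range n, ((2 : ℝ) + k)⁻¹ = ∑ j ∈ Icc 1 (n + 1), (1 : ℝ) / j - 1 := by
  induction n with
  | zero => simp
  | succ n ih =>
    rw [sum_range_succ, ih, sum_Icc_succ_top (by omega : 1 ≤ n + 1 + 1)]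
    push_cast
    ring

theorem stmt_5 (m : ℕ) (hm : 2 ≤ m) :
    deriv (fun lam : ℝ => (∏ k ∈ Finset.range (m-1), (lam + k)) - m.factorial) 2
      = m.factorial * ((∑ j ∈ Finset.Icc 1 m, (1:ℝ)/j) - 1) := by
  obtain ⟨n, rfl⟩ : ∃ n, m = n + 1 := ⟨m - 1, by omega⟩
  have hpos : ∀ k < n, (2 : ℝ) + k ≠ 0 := fun k _ => by positivity
  rw [Nat.add_sub_cancel, ((hasDerivAt_prod_range_add n hpos).sub_const _).deriv,
    prod_range_two_add_eq_factorial, sum_range_inv_two_add]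
end

section
/- For m ≥ 4, let λ_m = α_m + iβ_m (with β_m > 0) be a non-real root of the indicial polynomial ψ_m(λ) := λ(λ+1)⋯(λ+m−2) − m!. Then |λ_m + m − 1| < m + 1. -/
/-!
If `|λ + m - 1| ≥ m + 1`, then for every `0 ≤ k ≤ m - 2` the reverse triangle inequality gives
`|λ + k| = |(λ + m - 1) - (m - 1 - k)| ≥ (m + 1) - (m - 1 - k) = k + 2`, strictly because `λ` is not
real. Multiplying, `|λ (λ + 1) ⋯ (λ + m - 2)| > 2 · 3 ⋯ m = m!`, contradicting the root equation.
-/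

lemma Complex.norm_sub_lt_norm_sub_ofReal {z : ℂ} (hz : z.im ≠ 0) {b : ℝ} (hb : 0 < b) :
    ‖z‖ - b < ‖z - b‖ := by
  have hre : z.re < ‖z‖ := (le_abs_self _).trans_lt (Complex.abs_re_lt_norm.2 hz)
  have hsq : ‖z - b‖ ^ 2 = ‖z‖ ^ 2 - 2 * b * z.re + b ^ 2 := by
    simp only [Complex.sq_norm, Complex.normSq_apply, Complex.sub_re, Complex.sub_im,
      Complex.ofReal_re, Complex.ofReal_im]
    ring
  nlinarith [norm_nonneg (z - b), sq_nonneg (‖z - b‖ + (‖z‖ - b))]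

lemma Finset.prod_range_natCast_add_two (n : ℕ) :
    ∏ k ∈ Finset.range n, ((k : ℝ) + 2) = (n + 1).factorial := by
  rw [← Finset.prod_range_add_one_eq_factorial, Finset.prod_range_succ']
  push_cast
  simp only [add_assoc, one_add_one_eq_two, mul_one]

lemma Complex.natCast_add_two_lt_norm_add {lam : ℂ} (him : lam.im ≠ 0) {m k : ℕ} (hk : k + 1 < m)
    (h : (m : ℝ) + 1 ≤ ‖lam + m - 1‖) : (k : ℝ) + 2 < ‖lam + k‖ := by
  have hb : (0 : ℝ) < m - 1 - k := by
    have : (k : ℝ) + 1 < m := by exact_mod_cast hk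
    linarith
  have hz : (lam + m - 1).im ≠ 0 := by simpa using him
  have hshift : lam + k = lam + m - 1 - ((m - 1 - k : ℝ) : ℂ) := by push_cast; ring
  calc (k : ℝ) + 2 = (m + 1) - (m - 1 - k) := by ring
    _ ≤ ‖lam + m - 1‖ - (m - 1 - k) := by linarith
    _ < ‖lam + k‖ := hshift ▸ Complex.norm_sub_lt_norm_sub_ofReal hz hb

theorem stmt_18 (m : ℕ) (hm : 4 ≤ m) (lam : ℂ) (him : 0 < lam.im)
    (hroot : ∏ k ∈ Finset.range (m-1), (lam + k) = m.factorial) :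
    ‖lam + m - 1‖ < m + 1 := by
  by_contra! h
  have hfactors : ∀ k ∈ Finset.range (m - 1), (k : ℝ) + 2 < ‖lam + k‖ := fun k hk =>
    Complex.natCast_add_two_lt_norm_add him.ne' (by simp at hk; omega) h
  have hlt := Finset.prod_lt_prod_of_nonempty (fun k _ => by positivity) hfactors
    (Finset.nonempty_range_iff.2 (by omega))
  rw [Finset.prod_range_natCast_add_two, Nat.sub_add_cancel (by omega), ← norm_prod, hroot,
    Complex.norm_natCast] at hlt
  exact lt_irrefl _ hlt
end
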